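/- arXiv:2202.13445 — 2 statements merged into one kernel-verified Lean document; each statement's English description precedes it below -/
import Mathlib

section
/- For real numbers e₁, …, eₙ with Dₙ(t) = Sₙ(t) + t·Cₙ(t) as above, and λ > 0, the statistic T_{n,λ} = n·∫_ℝ Dₙ(t)²·e^{−λ|t|} dt admits the closed form T_{n,λ} = (λ/n)·Σ_{j,k=1}^n [ 1/(λ² + (e⁻ⱼₖ)²) − 1/(λ² + (e⁺ⱼₖ)²) + 4e⁺ⱼₖ/(λ² + (e⁺ⱼₖ)²)² + 2(λ² − 3(e⁺ⱼₖ)²)/(λ² + (e⁺ⱼₖ)²)³ + 2(λ² − 3(e⁻ⱼₖ)²)/(λ² + (e⁻ⱼₖ)²)³ ], where e⁺ⱼₖ = eₖ + eⱼ and e⁻ⱼₖ = eₖ − eⱼ. -/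
/-!
Writing `gⱼ(t) = sin(t eⱼ) + t cos(t eⱼ)`, the integrand is `n⁻² ∑ⱼ ∑ₖ gⱼ gₖ e^{-λ|t|}`, and the
product-to-sum formulas turn `gⱼ gₖ` into `cos(t e⁻)/2 - cos(t e⁺)/2 + t sin(t e⁺) + t² cos(t e⁺)/2 +
t² cos(t e⁻)/2`. So everything reduces to the three integrals `∫ tᵏ cos(tz) e^{-λ|t|}` (`k = 0, 2`) and
`∫ t sin(tz) e^{-λ|t|}`. Their integrands are even, so each is twice a half-line integral, which is the
real or imaginary part of `∫₀^∞ tᵏ e^{-(λ - iz)t} dt = k! / (λ - iz)^{k+1}`.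
-/

open MeasureTheory Set Filter Topology
open scoped Complex Nat

section Laplace

variable {w : ℂ}

lemma integrableOn_pow_mul_cexp_neg_mul (k : ℕ) (hw : 0 < w.re) :
    IntegrableOn (fun t : ℝ => (t : ℂ) ^ k * cexp (-(w * t))) (Ioi 0) := by
  have hreal : IntegrableOn (fun t : ℝ => t ^ (k : ℝ) * Real.exp (-w.re * t ^ (1 : ℝ))) (Ioi 0) :=
    integrableOn_rpow_mul_exp_neg_mul_rpow (by linarith [k.cast_nonneg (α := ℝ)]) one_pos hw
  refine hreal.mono' (by fun_prop) ((ae_restrict_iff' measurableSet_Ioi).2 (.of_forall ?_))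
  intro t (ht : 0 < t)
  simp [Complex.norm_exp, abs_of_pos ht]

lemma tendsto_pow_mul_cexp_neg_mul_atTop (k : ℕ) (hw : 0 < w.re) :
    Tendsto (fun t : ℝ => (t : ℂ) ^ k * cexp (-(w * t))) atTop (𝓝 0) := by
  rw [tendsto_zero_iff_norm_tendsto_zero]
  refine (tendsto_rpow_mul_exp_neg_mul_atTop_nhds_zero k w.re hw).congr' ?_
  filter_upwards [eventually_ge_atTop 0] with t ht
  simp [Complex.norm_exp, abs_of_nonneg ht]

lemma integral_pow_mul_cexp_neg_mul_Ioi (k : ℕ) (hw : 0 < w.re) :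
    ∫ t in Ioi (0 : ℝ), (t : ℂ) ^ k * cexp (-(w * t)) = k ! / w ^ (k + 1) := by
  have hw0 : w ≠ 0 := fun h => by simp [h] at hw
  induction k with
  | zero =>
    have := integral_exp_mul_complex_Ioi (a := -w) (by simpa using hw) 0
    simpa [neg_div] using this
  | succ k ih =>
    have hderiv : ∀ t ∈ Ici (0 : ℝ), HasDerivAt (fun t : ℝ => (t : ℂ) ^ (k + 1) * cexp (-(w * t)))
        ((k + 1) * ((t : ℂ) ^ k * cexp (-(w * t))) - w * ((t : ℂ) ^ (k + 1) * cexp (-(w * t)))) t := by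
      intro t _
      have h1 : HasDerivAt (fun t : ℝ => (t : ℂ) ^ (k + 1)) ((k + 1) * (t : ℂ) ^ k) t := by
        simpa using (hasDerivAt_pow (k + 1) (t : ℂ)).comp_ofReal
      have h2 : HasDerivAt (fun t : ℝ => cexp (-(w * t))) (cexp (-(w * t)) * -w) t := by
        simpa using (((hasDerivAt_id (t : ℂ)).const_mul w).neg.cexp).comp_ofReal
      exact (h1.mul h2).congr_deriv (by ring)
    -- FTC for `t ^ (k + 1) * exp (-w t)` gives `w * I (k + 1) = (k + 1) * I k`.
    have hftc := integral_Ioi_of_hasDerivAt_of_tendsto' hderiv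
      (((integrableOn_pow_mul_cexp_neg_mul k hw).const_mul _).sub
        ((integrableOn_pow_mul_cexp_neg_mul (k + 1) hw).const_mul _))
      (tendsto_pow_mul_cexp_neg_mul_atTop (k + 1) hw)
    rw [integral_sub (((integrableOn_pow_mul_cexp_neg_mul k hw).const_mul _))
        ((integrableOn_pow_mul_cexp_neg_mul (k + 1) hw).const_mul _),
      integral_const_mul, integral_const_mul, ih] at hftc
    simp only [Complex.ofReal_zero, ne_eq, Nat.add_eq_zero_iff, one_ne_zero, and_false,
      not_false_eq_true, zero_pow, zero_mul, sub_zero] at hftc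
    field_simp at hftc
    rw [eq_div_iff (pow_ne_zero _ hw0), Nat.factorial_succ]
    push_cast
    linear_combination -hftc

lemma factorial_div_sub_mul_I_pow (k : ℕ) {l z : ℝ} (h : l ^ 2 + z ^ 2 ≠ 0) :
    (k ! : ℂ) / (l - z * Complex.I) ^ (k + 1) =
      (l + z * Complex.I) ^ (k + 1) * ((k ! / (l ^ 2 + z ^ 2) ^ (k + 1) : ℝ) : ℂ) := by
  have hconj : (l + z * Complex.I) * (l - z * Complex.I) = ((l ^ 2 + z ^ 2 : ℝ) : ℂ) := by
    push_cast; ring_nf; rw [Complex.I_sq]; ring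
  have hne : (l - z * Complex.I) ≠ 0 := by
    intro h0
    apply h
    exact_mod_cast (by rw [← hconj, h0, mul_zero] : ((l ^ 2 + z ^ 2 : ℝ) : ℂ) = 0)
  have hC : ((l : ℂ) ^ 2 + (z : ℂ) ^ 2) ≠ 0 := by exact_mod_cast h
  rw [div_eq_iff (pow_ne_zero _ hne), mul_assoc, mul_comm, mul_assoc, ← mul_pow,
    mul_comm (l - z * Complex.I), hconj]
  push_cast
  field_simp

end Laplace

section HalfLine

variable {l : ℝ} (k : ℕ) (z : ℝ)

lemma re_pow_mul_cexp_neg_sub_mul_I (t : ℝ) :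
    ((t : ℂ) ^ k * cexp (-((l - z * Complex.I) * t))).re =
      t ^ k * Real.cos (t * z) * Real.exp (-(l * t)) := by
  rw [← Complex.ofReal_pow, Complex.re_ofReal_mul, Complex.exp_re]
  simp [mul_comm, mul_assoc]

lemma im_pow_mul_cexp_neg_sub_mul_I (t : ℝ) :
    ((t : ℂ) ^ k * cexp (-((l - z * Complex.I) * t))).im =
      t ^ k * Real.sin (t * z) * Real.exp (-(l * t)) := by
  rw [← Complex.ofReal_pow, Complex.im_ofReal_mul, Complex.exp_im]
  simp [mul_comm, mul_left_comm]

lemma integrableOn_pow_mul_cos_mul_exp_neg (hl : 0 < l) :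
    IntegrableOn (fun t => t ^ k * Real.cos (t * z) * Real.exp (-(l * t))) (Ioi 0) := by
  have h := (integrableOn_pow_mul_cexp_neg_mul k (w := l - z * Complex.I) (by simpa using hl)).re
  simp only [RCLike.re_to_complex, re_pow_mul_cexp_neg_sub_mul_I] at h
  exact h

lemma integrableOn_pow_mul_sin_mul_exp_neg (hl : 0 < l) :
    IntegrableOn (fun t => t ^ k * Real.sin (t * z) * Real.exp (-(l * t))) (Ioi 0) := by
  have h := (integrableOn_pow_mul_cexp_neg_mul k (w := l - z * Complex.I) (by simpa using hl)).im
  simp only [RCLike.im_to_complex, im_pow_mul_cexp_neg_sub_mul_I] at h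
  exact h

lemma integral_pow_mul_cos_mul_exp_neg_Ioi (hl : 0 < l) :
    ∫ t in Ioi 0, t ^ k * Real.cos (t * z) * Real.exp (-(l * t)) =
      ((k ! : ℂ) / (l - z * Complex.I) ^ (k + 1)).re := by
  have hw : 0 < (l - z * Complex.I).re := by simpa using hl
  simp_rw [← re_pow_mul_cexp_neg_sub_mul_I, ← RCLike.re_to_complex]
  rw [integral_re (integrableOn_pow_mul_cexp_neg_mul k hw), integral_pow_mul_cexp_neg_mul_Ioi k hw]

lemma integral_pow_mul_sin_mul_exp_neg_Ioi (hl : 0 < l) :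
    ∫ t in Ioi 0, t ^ k * Real.sin (t * z) * Real.exp (-(l * t)) =
      ((k ! : ℂ) / (l - z * Complex.I) ^ (k + 1)).im := by
  have hw : 0 < (l - z * Complex.I).re := by simpa using hl
  simp_rw [← im_pow_mul_cexp_neg_sub_mul_I, ← RCLike.im_to_complex]
  rw [integral_im (integrableOn_pow_mul_cexp_neg_mul k hw), integral_pow_mul_cexp_neg_mul_Ioi k hw]

end HalfLine

lemma integrable_comp_abs_of_integrableOn_Ioi {f : ℝ → ℝ} (hf : IntegrableOn f (Ioi 0)) :
    Integrable fun x => f |x| := by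
  have hIoi : IntegrableOn (fun x => f |x|) (Ioi 0) :=
    hf.congr_fun (fun x hx => by rw [abs_of_pos hx]) measurableSet_Ioi
  have hIic : IntegrableOn (fun x => f |x|) (Iic 0) := by
    rw [integrableOn_Iic_iff_integrableOn_Iio]
    have hneg : IntegrableOn (fun x => f |x|) (Ioi (-0)) := by rwa [neg_zero]
    simpa only [abs_neg] using hneg.comp_neg_Iio
  rw [← integrableOn_univ, ← Iic_union_Ioi (a := (0 : ℝ))]
  exact hIic.union hIoi

section WholeLine

variable {l : ℝ} (z : ℝ)

-- Each integrand is the half-line integrand evaluated at `|t|`, ready for `integral_comp_abs`.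
lemma cos_mul_exp_neg_abs_eq (t : ℝ) :
    Real.cos (t * z) * Real.exp (-(l * |t|)) =
      |t| ^ 0 * Real.cos (|t| * z) * Real.exp (-(l * |t|)) := by
  rcases abs_choice t with h | h <;> simp [h]

lemma mul_sin_mul_exp_neg_abs_eq (t : ℝ) :
    t * Real.sin (t * z) * Real.exp (-(l * |t|)) =
      |t| ^ 1 * Real.sin (|t| * z) * Real.exp (-(l * |t|)) := by
  rcases abs_choice t with h | h <;> simp [h]

lemma sq_mul_cos_mul_exp_neg_abs_eq (t : ℝ) :
    t ^ 2 * Real.cos (t * z) * Real.exp (-(l * |t|)) =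
      |t| ^ 2 * Real.cos (|t| * z) * Real.exp (-(l * |t|)) := by
  rcases abs_choice t with h | h <;> simp [h]

lemma integrable_cos_mul_exp_neg_abs (hl : 0 < l) :
    Integrable fun t => Real.cos (t * z) * Real.exp (-(l * |t|)) := by
  simpa only [← cos_mul_exp_neg_abs_eq] using
    integrable_comp_abs_of_integrableOn_Ioi (integrableOn_pow_mul_cos_mul_exp_neg 0 z hl)

lemma integrable_mul_sin_mul_exp_neg_abs (hl : 0 < l) :
    Integrable fun t => t * Real.sin (t * z) * Real.exp (-(l * |t|)) := by
  simpa only [← mul_sin_mul_exp_neg_abs_eq] using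
    integrable_comp_abs_of_integrableOn_Ioi (integrableOn_pow_mul_sin_mul_exp_neg 1 z hl)

lemma integrable_sq_mul_cos_mul_exp_neg_abs (hl : 0 < l) :
    Integrable fun t => t ^ 2 * Real.cos (t * z) * Real.exp (-(l * |t|)) := by
  simpa only [← sq_mul_cos_mul_exp_neg_abs_eq] using
    integrable_comp_abs_of_integrableOn_Ioi (integrableOn_pow_mul_cos_mul_exp_neg 2 z hl)

lemma integral_cos_mul_exp_neg_abs (hl : 0 < l) :
    ∫ t, Real.cos (t * z) * Real.exp (-(l * |t|)) = 2 * l / (l ^ 2 + z ^ 2) := by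
  have hD : l ^ 2 + z ^ 2 ≠ 0 := by positivity
  simp_rw [cos_mul_exp_neg_abs_eq z]
  rw [integral_comp_abs (f := fun t => t ^ 0 * Real.cos (t * z) * Real.exp (-(l * t))),
    integral_pow_mul_cos_mul_exp_neg_Ioi 0 z hl, factorial_div_sub_mul_I_pow 0 hD,
    Complex.re_mul_ofReal]
  simp only [zero_add, pow_one, Complex.add_re, Complex.mul_re, Complex.ofReal_re,
    Complex.ofReal_im, Complex.I_re, Complex.I_im, Nat.factorial]
  push_cast
  field_simp
  ring

lemma integral_mul_sin_mul_exp_neg_abs (hl : 0 < l) :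
    ∫ t, t * Real.sin (t * z) * Real.exp (-(l * |t|)) = 4 * l * z / (l ^ 2 + z ^ 2) ^ 2 := by
  have hD : l ^ 2 + z ^ 2 ≠ 0 := by positivity
  simp_rw [mul_sin_mul_exp_neg_abs_eq z]
  rw [integral_comp_abs (f := fun t => t ^ 1 * Real.sin (t * z) * Real.exp (-(l * t))),
    integral_pow_mul_sin_mul_exp_neg_Ioi 1 z hl, factorial_div_sub_mul_I_pow 1 hD,
    Complex.im_mul_ofReal]
  simp only [pow_succ, pow_zero, one_mul, Complex.add_re, Complex.add_im, Complex.mul_re,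
    Complex.mul_im, Complex.ofReal_re, Complex.ofReal_im, Complex.I_re, Complex.I_im,
    Nat.factorial]
  push_cast
  field_simp
  ring

lemma integral_sq_mul_cos_mul_exp_neg_abs (hl : 0 < l) :
    ∫ t, t ^ 2 * Real.cos (t * z) * Real.exp (-(l * |t|)) =
      4 * l * (l ^ 2 - 3 * z ^ 2) / (l ^ 2 + z ^ 2) ^ 3 := by
  have hD : l ^ 2 + z ^ 2 ≠ 0 := by positivity
  simp_rw [sq_mul_cos_mul_exp_neg_abs_eq z]
  rw [integral_comp_abs (f := fun t => t ^ 2 * Real.cos (t * z) * Real.exp (-(l * t))),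
    integral_pow_mul_cos_mul_exp_neg_Ioi 2 z hl, factorial_div_sub_mul_I_pow 2 hD,
    Complex.re_mul_ofReal]
  simp only [pow_succ, pow_zero, one_mul, Complex.add_re, Complex.add_im, Complex.mul_re,
    Complex.mul_im, Complex.ofReal_re, Complex.ofReal_im, Complex.I_re, Complex.I_im,
    Nat.factorial]
  push_cast
  field_simp
  ring

end WholeLine

lemma sin_add_mul_cos_mul_sin_add_mul_cos (a b t : ℝ) :
    (Real.sin (t * a) + t * Real.cos (t * a)) * (Real.sin (t * b) + t * Real.cos (t * b)) =
      Real.cos (t * (b - a)) / 2 - Real.cos (t * (b + a)) / 2 + t * Real.sin (t * (b + a)) +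
        t ^ 2 * Real.cos (t * (b + a)) / 2 + t ^ 2 * Real.cos (t * (b - a)) / 2 := by
  rw [show t * (b - a) = t * b - t * a by ring, show t * (b + a) = t * b + t * a by ring,
    Real.cos_sub, Real.cos_add, Real.sin_add]
  ring

lemma integrable_sin_add_mul_cos_mul_sin_add_mul_cos_mul_exp_neg_abs {l : ℝ} (hl : 0 < l)
    (a b : ℝ) :
    Integrable fun t => (Real.sin (t * a) + t * Real.cos (t * a)) *
      (Real.sin (t * b) + t * Real.cos (t * b)) * Real.exp (-(l * |t|)) := by
  have c0m := integrable_cos_mul_exp_neg_abs (b - a) hl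
  have c0p := integrable_cos_mul_exp_neg_abs (b + a) hl
  have s1p := integrable_mul_sin_mul_exp_neg_abs (b + a) hl
  have c2p := integrable_sq_mul_cos_mul_exp_neg_abs (b + a) hl
  have c2m := integrable_sq_mul_cos_mul_exp_neg_abs (b - a) hl
  simp_rw [sin_add_mul_cos_mul_sin_add_mul_cos, add_mul, sub_mul, div_mul_eq_mul_div]
  fun_prop

lemma integral_sin_add_mul_cos_mul_sin_add_mul_cos_mul_exp_neg_abs {l : ℝ} (hl : 0 < l)
    (a b : ℝ) :
    ∫ t, (Real.sin (t * a) + t * Real.cos (t * a)) * (Real.sin (t * b) + t * Real.cos (t * b)) *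
        Real.exp (-(l * |t|)) =
      l * (1 / (l ^ 2 + (b - a) ^ 2) - 1 / (l ^ 2 + (b + a) ^ 2) +
        4 * (b + a) / (l ^ 2 + (b + a) ^ 2) ^ 2 +
        2 * (l ^ 2 - 3 * (b + a) ^ 2) / (l ^ 2 + (b + a) ^ 2) ^ 3 +
        2 * (l ^ 2 - 3 * (b - a) ^ 2) / (l ^ 2 + (b - a) ^ 2) ^ 3) := by
  have c0m := integrable_cos_mul_exp_neg_abs (b - a) hl
  have c0p := integrable_cos_mul_exp_neg_abs (b + a) hl
  have s1p := integrable_mul_sin_mul_exp_neg_abs (b + a) hl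
  have c2p := integrable_sq_mul_cos_mul_exp_neg_abs (b + a) hl
  have c2m := integrable_sq_mul_cos_mul_exp_neg_abs (b - a) hl
  simp_rw [sin_add_mul_cos_mul_sin_add_mul_cos, add_mul, sub_mul, div_mul_eq_mul_div]
  rw [integral_add (by fun_prop) (by fun_prop), integral_add (by fun_prop) (by fun_prop),
    integral_add (by fun_prop) (by fun_prop), integral_sub (by fun_prop) (by fun_prop)]
  simp only [integral_div, integral_cos_mul_exp_neg_abs _ hl, integral_mul_sin_mul_exp_neg_abs _ hl,
    integral_sq_mul_cos_mul_exp_neg_abs _ hl]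
  ring

theorem Tn_closed_form_general (n : ℕ) (e : Fin n → ℝ) (l : ℝ) (hl : 0 < l) :
    (n : ℝ) * ∫ t : ℝ,
        (((1 / n : ℝ) * ∑ j, Real.sin (t * e j)) +
          t * ((1 / n : ℝ) * ∑ j, Real.cos (t * e j))) ^ 2 * Real.exp (-(l * |t|)) =
      (l / n) * ∑ j, ∑ k,
        (1 / (l ^ 2 + (e k - e j) ^ 2) - 1 / (l ^ 2 + (e k + e j) ^ 2) +
          4 * (e k + e j) / (l ^ 2 + (e k + e j) ^ 2) ^ 2 +
          2 * (l ^ 2 - 3 * (e k + e j) ^ 2) / (l ^ 2 + (e k + e j) ^ 2) ^ 3 +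
          2 * (l ^ 2 - 3 * (e k - e j) ^ 2) / (l ^ 2 + (e k - e j) ^ 2) ^ 3) := by
  set g : Fin n → ℝ → ℝ := fun j t => Real.sin (t * e j) + t * Real.cos (t * e j)
  have hg : ∀ j k, Integrable fun t => g j t * g k t * Real.exp (-(l * |t|)) := fun j k =>
    integrable_sin_add_mul_cos_mul_sin_add_mul_cos_mul_exp_neg_abs hl (e j) (e k)
  have hexpand : ∀ t : ℝ, (((1 / n : ℝ) * ∑ j, Real.sin (t * e j)) +
      t * ((1 / n : ℝ) * ∑ j, Real.cos (t * e j))) ^ 2 * Real.exp (-(l * |t|)) =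
      (1 / n : ℝ) ^ 2 * ∑ j, ∑ k, g j t * g k t * Real.exp (-(l * |t|)) := by
    intro t
    have hsum : (1 / n : ℝ) * ∑ j, Real.sin (t * e j) + t * ((1 / n : ℝ) * ∑ j, Real.cos (t * e j))
        = (1 / n : ℝ) * ∑ j, g j t := by
      simp only [g, Finset.sum_add_distrib, ← Finset.mul_sum]
      ring
    rw [hsum, mul_pow, sq (∑ j, g j t), Finset.sum_mul_sum, mul_assoc, Finset.sum_mul]
    simp_rw [Finset.sum_mul]
  have hn : (n : ℝ) * (1 / n) ^ 2 = 1 / n := by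
    rcases eq_or_ne (n : ℝ) 0 with h | h
    · simp [h]
    · field_simp
  simp_rw [hexpand]
  rw [integral_const_mul, integral_finsetSum _ fun j _ => integrable_finsetSum _ fun k _ => hg j k]
  simp_rw [integral_finsetSum _ fun k _ => hg _ k, g,
    integral_sin_add_mul_cos_mul_sin_add_mul_cos_mul_exp_neg_abs hl, ← Finset.mul_sum]
  rw [← mul_assoc, hn]
  ring

theorem Tn_closed_form (n : ℕ) (hn : 0 < n) (e : Fin n → ℝ) (l : ℝ) (hl : 0 < l) :
    (n : ℝ) * ∫ t : ℝ,
        (((1 / n : ℝ) * ∑ j, Real.sin (t * e j)) +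
          t * ((1 / n : ℝ) * ∑ j, Real.cos (t * e j))) ^ 2 * Real.exp (-(l * |t|)) =
      (l / n) * ∑ j, ∑ k,
        (1 / (l ^ 2 + (e k - e j) ^ 2) - 1 / (l ^ 2 + (e k + e j) ^ 2) +
          4 * (e k + e j) / (l ^ 2 + (e k + e j) ^ 2) ^ 2 +
          2 * (l ^ 2 - 3 * (e k + e j) ^ 2) / (l ^ 2 + (e k + e j) ^ 2) ^ 3 +
          2 * (l ^ 2 - 3 * (e k - e j) ^ 2) / (l ^ 2 + (e k - e j) ^ 2) ^ 3) :=
  Tn_closed_form_general n e l hl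
end

section
/- For fixed real numbers e₁, …, eₙ, with Dₙ(t) = Sₙ(t) + t·Cₙ(t) and T_{n,λ} = n·∫_ℝ Dₙ(t)²·e^{−λ|t|}dt, one has lim_{λ→∞} (λ³/4)·T_{n,λ} = n·((1/n)·Σⱼ eⱼ + 1)². -/
/-!
Substituting `t = x / λ` turns `λ³ ∫ Dₙ(t)² e^{-λ|t|} dt` into `∫ (λ Dₙ(x/λ))² e^{-|x|} dx`.
Since `Dₙ(0) = 0`, the integrand converges pointwise to `(Dₙ'(0) x)² e^{-|x|}`, and the bound
`|Dₙ(t)| ≤ M |t|` dominates it by `M² x² e^{-|x|}`; dominated convergence and `∫ x² e^{-|x|} = 4`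
give the limit `4 Dₙ'(0)²` with `Dₙ'(0) = (1/n) Σⱼ eⱼ + 1`.
-/

open MeasureTheory Filter Set Topology Real

lemma integrableOn_pow_mul_exp_neg_Ioi (m : ℕ) :
    IntegrableOn (fun x : ℝ => x ^ m * exp (-x)) (Ioi 0) := by
  refine (GammaIntegral_convergent (s := m + 1) (by positivity)).congr_fun
    (fun x _ => ?_) measurableSet_Ioi
  simp [mul_comm]

lemma integral_pow_mul_exp_neg_Ioi (m : ℕ) :
    ∫ x in Ioi (0 : ℝ), x ^ m * exp (-x) = m.factorial := by
  rw [← Gamma_nat_eq_factorial, Gamma_eq_integral (by positivity)]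
  simp [mul_comm]

lemma integrable_comp_abs {f : ℝ → ℝ} (hf : IntegrableOn f (Ioi 0)) :
    Integrable (fun x : ℝ => f |x|) := by
  have hIoi : IntegrableOn (fun x : ℝ => f |x|) (Ioi 0) :=
    hf.congr_fun (fun x hx => by rw [abs_of_pos hx]) measurableSet_Ioi
  have hIic : IntegrableOn (fun x : ℝ => f |x|) (Iic 0) := by
    have hneg : MeasurableEmbedding fun x : ℝ => -x := (Homeomorph.neg ℝ).measurableEmbedding
    rw [← Measure.map_neg_eq_self (volume : Measure ℝ), hneg.integrableOn_map_iff]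
    simp_rw [Function.comp_def, abs_neg, neg_preimage, neg_Iic, neg_zero]
    exact (integrableOn_Ici_iff_integrableOn_Ioi).mpr hIoi
  rw [← integrableOn_univ, ← Iic_union_Ioi (a := (0 : ℝ))]
  exact hIic.union hIoi

lemma integrable_abs_pow_mul_exp_neg_abs (m : ℕ) :
    Integrable (fun x : ℝ => |x| ^ m * exp (-|x|)) :=
  integrable_comp_abs (integrableOn_pow_mul_exp_neg_Ioi m)

lemma integral_abs_pow_mul_exp_neg_abs (m : ℕ) :
    ∫ x : ℝ, |x| ^ m * exp (-|x|) = 2 * m.factorial := by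
  rw [integral_comp_abs (f := fun x => x ^ m * exp (-x)), integral_pow_mul_exp_neg_Ioi]

lemma integral_comp_div_mul_exp_neg_abs (g : ℝ → ℝ) {l : ℝ} (hl : 0 < l) :
    ∫ x : ℝ, g (x / l) * exp (-|x|) = l * ∫ t : ℝ, g t * exp (-(l * |t|)) := by
  calc ∫ x : ℝ, g (x / l) * exp (-|x|)
      = ∫ x : ℝ, (fun t => g t * exp (-(l * |t|))) (x / l) := by
        congr 1 with x
        beta_reduce
        rw [abs_div, abs_of_pos hl, mul_div_cancel₀ _ hl.ne']
    _ = l * ∫ t : ℝ, g t * exp (-(l * |t|)) := by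
        rw [Measure.integral_comp_div (fun t => g t * exp (-(l * |t|))), abs_of_pos hl,
          smul_eq_mul]

section Rescaling

variable {D : ℝ → ℝ} {a M : ℝ}

lemma abs_mul_comp_div_le (hbound : ∀ t, |D t| ≤ M * |t|) {l : ℝ} (hl : 0 < l) (x : ℝ) :
    |l * D (x / l)| ≤ M * |x| :=
  calc |l * D (x / l)| = l * |D (x / l)| := by rw [abs_mul, abs_of_pos hl]
    _ ≤ l * (M * |x / l|) := by gcongr; exact hbound _
    _ = M * |x| := by rw [abs_div, abs_of_pos hl]; field_simp

lemma HasDerivAt.tendsto_mul_comp_div_atTop (hD : HasDerivAt D a 0) (h0 : D 0 = 0) (x : ℝ) :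
    Tendsto (fun l => l * D (x / l)) atTop (𝓝 (a * x)) := by
  rcases eq_or_ne x 0 with rfl | hx
  · simp [h0]
  have hslope := (hasDerivAt_iff_tendsto_slope_zero.mp hD).mul_const x
  have hscale : Tendsto (fun l : ℝ => x / l) atTop (𝓝[≠] 0) :=
    tendsto_nhdsWithin_of_tendsto_nhds_of_eventually_within _
      (tendsto_const_nhds.div_atTop tendsto_id)
      (eventually_gt_atTop 0 |>.mono fun l hl => div_ne_zero hx hl.ne')
  refine (hslope.comp hscale).congr' ?_
  filter_upwards [eventually_gt_atTop 0] with l hl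
  simp only [Function.comp_apply, inv_div, zero_add, h0, sub_zero, smul_eq_mul]
  field_simp

theorem tendsto_pow_three_mul_integral_sq_mul_exp_neg_mul_abs (hmeas : Measurable D)
    (hbound : ∀ t, |D t| ≤ M * |t|) (hD : HasDerivAt D a 0) :
    Tendsto (fun l : ℝ => l ^ 3 * ∫ t, D t ^ 2 * exp (-(l * |t|))) atTop (𝓝 (4 * a ^ 2)) := by
  have h0 : D 0 = 0 := abs_nonpos_iff.mp (by simpa using hbound 0)
  have hscaled : Tendsto (fun l : ℝ => ∫ x, (l * D (x / l)) ^ 2 * exp (-|x|)) atTop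
      (𝓝 (∫ x, a ^ 2 * (|x| ^ 2 * exp (-|x|)))) := by
    refine tendsto_integral_filter_of_dominated_convergence
      (fun x => M ^ 2 * (|x| ^ 2 * exp (-|x|))) (.of_forall fun l => by fun_prop) ?_
      ((integrable_abs_pow_mul_exp_neg_abs 2).const_mul _) (.of_forall fun x => ?_)
    · filter_upwards [eventually_gt_atTop 0] with l hl
      refine .of_forall fun x => ?_
      rw [norm_eq_abs, abs_of_nonneg (by positivity), ← sq_abs (l * _), ← mul_assoc, ← mul_pow]
      gcongr
      exact abs_mul_comp_div_le hbound hl x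
    · have := ((hD.tendsto_mul_comp_div_atTop h0 x).pow 2).mul_const (exp (-|x|))
      simpa only [mul_pow, sq_abs, mul_assoc] using this
  rw [integral_const_mul, integral_abs_pow_mul_exp_neg_abs,
    show a ^ 2 * (2 * (Nat.factorial 2 : ℝ)) = 4 * a ^ 2 by norm_num; ring] at hscaled
  refine hscaled.congr' ?_
  filter_upwards [eventually_gt_atTop 0] with l hl
  simp_rw [mul_pow, mul_assoc, integral_const_mul]
  rw [integral_comp_div_mul_exp_neg_abs (fun t => D t ^ 2) hl]
  ring

end Rescaling

lemma hasDerivAt_id_mul_zero {C : ℝ → ℝ} (hC : DifferentiableAt ℝ C 0) :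
    HasDerivAt (fun t => t * C t) (C 0) 0 := by
  simpa using (hasDerivAt_id 0).fun_mul hC.hasDerivAt

section EmpiricalMeans

variable {n : ℕ} (e : Fin n → ℝ)

noncomputable def sinMean (t : ℝ) : ℝ := (1 / n : ℝ) * ∑ j, Real.sin (t * e j)

noncomputable def cosMean (t : ℝ) : ℝ := (1 / n : ℝ) * ∑ j, Real.cos (t * e j)

lemma abs_sinMean_le (t : ℝ) : |sinMean e t| ≤ (1 / n : ℝ) * (∑ j, |e j|) * |t| := by
  rw [sinMean, abs_mul, abs_of_nonneg (by positivity), mul_assoc, Finset.sum_mul]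
  gcongr
  refine (Finset.abs_sum_le_sum_abs _ _).trans (Finset.sum_le_sum fun j _ => ?_)
  exact abs_sin_le_abs.trans_eq (by rw [abs_mul, mul_comm])

lemma abs_cosMean_le_one (t : ℝ) : |cosMean e t| ≤ 1 := by
  rw [cosMean, abs_mul, abs_of_nonneg (by positivity)]
  calc (1 / n : ℝ) * |∑ j, Real.cos (t * e j)| ≤ (1 / n : ℝ) * n := by
        gcongr
        refine (Finset.abs_sum_le_sum_abs _ _).trans ?_
        simpa using Finset.sum_le_sum fun j (_ : j ∈ Finset.univ) => abs_cos_le_one (t * e j)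
    _ ≤ 1 := by rw [one_div_mul_eq_div]; exact div_self_le_one _

lemma abs_sinMean_add_mul_cosMean_le (t : ℝ) :
    |sinMean e t + t * cosMean e t| ≤ ((1 / n : ℝ) * (∑ j, |e j|) + 1) * |t| :=
  calc |sinMean e t + t * cosMean e t| ≤ |sinMean e t| + |t| * |cosMean e t| :=
        (abs_add_le _ _).trans_eq (by rw [abs_mul])
    _ ≤ (1 / n : ℝ) * (∑ j, |e j|) * |t| + |t| * 1 := by
        gcongr
        exacts [abs_sinMean_le e t, abs_cosMean_le_one e t]
    _ = ((1 / n : ℝ) * (∑ j, |e j|) + 1) * |t| := by ring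

lemma hasDerivAt_sinMean_zero : HasDerivAt (sinMean e) ((1 / n : ℝ) * ∑ j, e j) 0 := by
  refine .const_mul _ (.fun_sum fun j _ => ?_)
  simpa using ((hasDerivAt_mul_const (e j)).sin : HasDerivAt _ _ (0 : ℝ))

lemma differentiable_cosMean : Differentiable ℝ (cosMean e) := by
  unfold cosMean
  fun_prop

end EmpiricalMeans

theorem Tn_limit_statistic_general (n : ℕ) (e : Fin n → ℝ) :
    Tendsto (fun l : ℝ =>
        (l ^ 3 / 4) * ((n : ℝ) * ∫ t : ℝ,
          (((1 / n : ℝ) * ∑ j, Real.sin (t * e j)) +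
            t * ((1 / n : ℝ) * ∑ j, Real.cos (t * e j))) ^ 2 *
              Real.exp (-(l * |t|))))
      atTop
      (nhds ((n : ℝ) * ((1 / n : ℝ) * (∑ j, e j) + 1) ^ 2)) := by
  have hmeas : Measurable fun t => sinMean e t + t * cosMean e t := by
    unfold sinMean cosMean
    fun_prop
  have hderiv := (hasDerivAt_sinMean_zero e).add
    (hasDerivAt_id_mul_zero (differentiable_cosMean e 0))
  have hlim := tendsto_pow_three_mul_integral_sq_mul_exp_neg_mul_abs hmeas
    (abs_sinMean_add_mul_cosMean_le e) hderiv
  convert hlim.const_mul ((n : ℝ) / 4) using 1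
  · ext l
    simp only [sinMean, cosMean]
    ring
  · rcases eq_or_ne (n : ℝ) 0 with hn | hn
    · simp [hn]
    · simp only [cosMean, zero_mul, cos_zero, Finset.sum_const, Finset.card_univ,
        Fintype.card_fin, nsmul_eq_mul, mul_one]
      field_simp

theorem Tn_limit_statistic (n : ℕ) (hn : 0 < n) (e : Fin n → ℝ) :
    Tendsto (fun l : ℝ =>
        (l ^ 3 / 4) * ((n : ℝ) * ∫ t : ℝ,
          (((1 / n : ℝ) * ∑ j, Real.sin (t * e j)) +
            t * ((1 / n : ℝ) * ∑ j, Real.cos (t * e j))) ^ 2 *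
              Real.exp (-(l * |t|))))
      atTop
      (nhds ((n : ℝ) * ((1 / n : ℝ) * (∑ j, e j) + 1) ^ 2)) :=
  Tn_limit_statistic_general n e
end
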